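/- arXiv:1406.5812 — 6 statements merged into one kernel-verified Lean document; each statement's English description precedes it below -/
import Mathlib

section
/- Let x, y, z be nonnegative real numbers with x + y + z = 1 and y > 0. Then x·y·z / ((y + x)(y + z)) ≤ (5√5 − 11)/2. -/
/-!
Since `x + y + z = 1`, the denominator is `y + xz`, so the quotient is `y p / (y + p)` with
`p = xz`. This is increasing in `p`, and `p ≤ ((1 - y) / 2) ^ 2`, which leaves the one-variable
bound `y (1 - y)² ≤ c (1 + y)²` for `c = (5√5 - 11) / 2`. The difference of the two sides is
`(y - (√5 - 2))² ((√5 + 1) / 2 - y)`, so the maximum is attained at `y = √5 - 2`.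
-/

theorem mul_div_add_le_mul_div_add {K : Type*} [Field K] [LinearOrder K] [IsStrictOrderedRing K]
    {y p q : K} (hy : 0 < y) (hp : 0 ≤ p) (hpq : p ≤ q) :
    y * p / (y + p) ≤ y * q / (y + q) := by
  rw [div_le_div_iff₀ (by linarith) (by linarith)]
  nlinarith [mul_le_mul_of_nonneg_left hpq (sq_nonneg y)]

theorem mul_one_sub_sq_le_mul_one_add_sq {y : ℝ} (hy : y ≤ (√5 + 1) / 2) :
    y * (1 - y) ^ 2 ≤ (5 * √5 - 11) / 2 * (1 + y) ^ 2 := by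
  have h5 : √5 ^ 2 = 5 := Real.sq_sqrt (by norm_num)
  have hfactor : (5 * √5 - 11) / 2 * (1 + y) ^ 2 - y * (1 - y) ^ 2
      = (y - (√5 - 2)) ^ 2 * ((√5 + 1) / 2 - y) := by
    linear_combination (2 * y + 3 / 2 - √5 / 2) * h5
  rw [← sub_nonneg, hfactor]
  exact mul_nonneg (sq_nonneg _) (sub_nonneg.mpr hy)

theorem stmt_4 (x y z : ℝ) (hx : 0 ≤ x) (hy : 0 < y) (hz : 0 ≤ z)
    (hsum : x + y + z = 1) :
    x * y * z / ((y + x) * (y + z)) ≤ (5 * Real.sqrt 5 - 11) / 2 := by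
  have hden : (y + x) * (y + z) = y + x * z := by
    linear_combination y * hsum
  have hxz : x * z ≤ (1 - y) ^ 2 / 4 := by
    nlinarith [four_mul_le_sq_add x z]
  have hy1 : y ≤ (√5 + 1) / 2 := by
    nlinarith [Real.le_sqrt_of_sq_le (show (1 : ℝ) ^ 2 ≤ 5 by norm_num)]
  calc x * y * z / ((y + x) * (y + z)) = y * (x * z) / (y + x * z) := by
        rw [hden]; ring
    _ ≤ y * ((1 - y) ^ 2 / 4) / (y + (1 - y) ^ 2 / 4) :=
        mul_div_add_le_mul_div_add hy (mul_nonneg hx hz) hxz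
    _ = y * (1 - y) ^ 2 / (1 + y) ^ 2 := by
        field_simp; ring
    _ ≤ (5 * √5 - 11) / 2 := by
        rw [div_le_iff₀ (by positivity)]
        exact mul_one_sub_sq_le_mul_one_add_sq hy1
end

section
/- Let x, y, z be nonnegative real numbers with x + y + z ≤ 1 and y > 0. Then x·y·z / ((y + x)(y + z)) ≤ (5√5 − 11)/2, and equality in the maximization over the constraint set is attained when x + y + z = 1. -/
/-!
For fixed `y` and `s = x + z`, the quotient grows with `xz`, so by AM-GM it is at most
`y s² / (2y + s)²`, which grows with `s`; hence it is at most `g y = y (1 - y)² / (1 + y)²`.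
Finally `c (1 + y)² - y (1 - y)² = (y - (√5 - 2))² ((1 + √5)/2 - y)` for `c = (5√5 - 11)/2`,
so `g ≤ c` for `0 ≤ y ≤ (1 + √5)/2`, with equality at `y = √5 - 2`, `x = z = (3 - √5)/2`.
-/

open Real

lemma mul_mul_div_add_mul_add_le {x y z : ℝ} (hx : 0 ≤ x) (hy : 0 < y) (hz : 0 ≤ z) :
    x * y * z / ((y + x) * (y + z)) ≤ y * (x + z) ^ 2 / (2 * y + (x + z)) ^ 2 := by
  have h4xz : 4 * (x * z) ≤ (x + z) ^ 2 := by nlinarith [sq_nonneg (x - z)]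
  rw [div_le_div_iff₀ (by positivity) (by positivity)]
  nlinarith [mul_le_mul_of_nonneg_left h4xz (by positivity : 0 ≤ y * (y ^ 2 + y * (x + z)))]

lemma mul_sq_div_two_mul_add_sq_le_of_le {y s t : ℝ} (hy : 0 < y) (hs : 0 ≤ s) (hst : s ≤ t) :
    y * s ^ 2 / (2 * y + s) ^ 2 ≤ y * t ^ 2 / (2 * y + t) ^ 2 := by
  have hfrac : s / (2 * y + s) ≤ t / (2 * y + t) := by
    rw [div_le_div_iff₀ (by linarith) (by linarith)]
    nlinarith
  simp only [mul_div_assoc, ← div_pow]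
  gcongr

lemma mul_one_sub_sq_div_one_add_sq_le {y : ℝ} (hy₀ : 0 ≤ y) (hy : y ≤ (1 + √5) / 2) :
    y * (1 - y) ^ 2 / (1 + y) ^ 2 ≤ (5 * √5 - 11) / 2 := by
  have h5 : √5 ^ 2 = 5 := sq_sqrt (by norm_num)
  rw [div_le_iff₀ (by positivity)]
  have hfactor : (5 * √5 - 11) / 2 * (1 + y) ^ 2 - y * (1 - y) ^ 2
      = (y - (√5 - 2)) ^ 2 * ((1 + √5) / 2 - y) := by
    linear_combination (2 * y + 3 / 2 - √5 / 2) * h5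
  linarith [mul_nonneg (sq_nonneg (y - (√5 - 2))) (sub_nonneg.2 hy)]

theorem stmt_5 (x y z : ℝ) (hx : 0 ≤ x) (hy : 0 < y) (hz : 0 ≤ z)
    (hsum : x + y + z ≤ 1) :
    x * y * z / ((y + x) * (y + z)) ≤ (5 * Real.sqrt 5 - 11) / 2 ∧
    ∃ x' y' z' : ℝ, 0 ≤ x' ∧ 0 < y' ∧ 0 ≤ z' ∧ x' + y' + z' = 1 ∧
      x' * y' * z' / ((y' + x') * (y' + z')) = (5 * Real.sqrt 5 - 11) / 2 := by
  have h5 : √5 ^ 2 = 5 := sq_sqrt (by norm_num)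
  have hlo : (11 / 5 : ℝ) ≤ √5 := by nlinarith [sqrt_nonneg 5]
  have hhi : √5 ≤ 9 / 4 := by nlinarith [sqrt_nonneg 5]
  constructor
  · calc x * y * z / ((y + x) * (y + z))
        ≤ y * (x + z) ^ 2 / (2 * y + (x + z)) ^ 2 := mul_mul_div_add_mul_add_le hx hy hz
      _ ≤ y * (1 - y) ^ 2 / (2 * y + (1 - y)) ^ 2 :=
          mul_sq_div_two_mul_add_sq_le_of_le hy (by positivity) (by linarith)
      _ = y * (1 - y) ^ 2 / (1 + y) ^ 2 := by ring_nf
      _ ≤ (5 * √5 - 11) / 2 := mul_one_sub_sq_div_one_add_sq_le hy.le (by linarith)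
  · refine ⟨(3 - √5) / 2, √5 - 2, (3 - √5) / 2, by linarith, by linarith, by linarith,
      by ring, ?_⟩
    rw [div_eq_iff (by nlinarith)]
    linear_combination ((5 - 3 * √5) / 8) * h5
end

section
/- The maximum of f(x, y, z) = x·y·z / ((y + x)(y + z)) over nonnegative reals with x + y + z = 1 equals (5√5 − 11)/2, and it is attained at x = z = (3 − √5)/2, y = √5 − 2. -/
/-!
For fixed `y`, write `(y + x) * (y + z) = y * (y + x + z) + x * z`: the ratio is increasing in the
product `x * z`, so for fixed `x + z = 1 - y` it is largest at `x = z = (1 - y) / 2`, where it equals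
`y * (1 - y) ^ 2 / (1 + y) ^ 2`. With `c = (5 * √5 - 11) / 2` the one-variable bound is the identity
`c * (1 + y) ^ 2 - y * (1 - y) ^ 2 = (y - (√5 - 2)) ^ 2 * ((1 + √5) / 2 - y)`.
In terms of the golden ratio `φ`, the maximiser is `x = z = φ⁻²`, `y = φ⁻³`, and the maximum is `φ⁻⁵`.
-/

open Real

noncomputable def tripleRatio (x y z : ℝ) : ℝ := x * y * z / ((y + x) * (y + z))

lemma tripleRatio_le_midpoint {x y z : ℝ} (hx : 0 ≤ x) (hy : 0 < y) (hz : 0 ≤ z) :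
    tripleRatio x y z ≤ tripleRatio ((x + z) / 2) y ((x + z) / 2) := by
  unfold tripleRatio
  rw [div_le_div_iff₀ (by positivity) (by positivity)]
  have am_gm : x * z ≤ ((x + z) / 2) ^ 2 := by nlinarith [sq_nonneg (x - z)]
  have hD : 0 ≤ y * (y * (y + x + z)) := by positivity
  nlinarith [mul_le_mul_of_nonneg_right am_gm hD]

lemma tripleRatio_midpoint_le {y : ℝ} (hy : 0 ≤ y) (hy1 : y ≤ 1) :
    tripleRatio ((1 - y) / 2) y ((1 - y) / 2) ≤ (5 * √5 - 11) / 2 := by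
  have hs : √5 ^ 2 = 5 := sq_sqrt (by norm_num)
  have h1 : (1 : ℝ) ≤ √5 := by nlinarith [sqrt_nonneg 5]
  have key : (5 * √5 - 11) / 2 * (1 + y) ^ 2 - y * (1 - y) ^ 2 =
      (y - (√5 - 2)) ^ 2 * ((1 + √5) / 2 - y) := by
    linear_combination (3 / 2 + 2 * y - √5 / 2) * hs
  have hmid : tripleRatio ((1 - y) / 2) y ((1 - y) / 2) = y * (1 - y) ^ 2 / (1 + y) ^ 2 := by
    rw [tripleRatio, show y + (1 - y) / 2 = (1 + y) / 2 by ring]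
    field_simp
  rw [hmid, div_le_iff₀ (by positivity)]
  linarith [key, mul_nonneg (sq_nonneg (y - (√5 - 2))) (by linarith : 0 ≤ (1 + √5) / 2 - y)]

lemma tripleRatio_golden :
    tripleRatio ((3 - √5) / 2) (√5 - 2) ((3 - √5) / 2) = (5 * √5 - 11) / 2 := by
  have hs : √5 ^ 2 = 5 := sq_sqrt (by norm_num)
  have h3 : √5 < 3 := by nlinarith [sqrt_nonneg 5]
  unfold tripleRatio
  rw [div_eq_iff (by nlinarith)]
  linear_combination (5 / 8 - 3 / 8 * √5) * hs

theorem stmt_6 :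
    IsGreatest
      {r : ℝ | ∃ x y z : ℝ, 0 ≤ x ∧ 0 < y ∧ 0 ≤ z ∧ x + y + z = 1 ∧
        r = x * y * z / ((y + x) * (y + z))}
      ((5 * Real.sqrt 5 - 11) / 2) ∧
    ((3 - Real.sqrt 5) / 2) * (Real.sqrt 5 - 2) * ((3 - Real.sqrt 5) / 2) /
      (((Real.sqrt 5 - 2) + (3 - Real.sqrt 5) / 2) *
        ((Real.sqrt 5 - 2) + (3 - Real.sqrt 5) / 2)) =
      (5 * Real.sqrt 5 - 11) / 2 := by
  have hmax := tripleRatio_golden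
  have h2 : 2 < √5 := lt_sqrt_of_sq_lt (by norm_num)
  have h3 : √5 < 3 := (sqrt_lt' (by norm_num)).2 (by norm_num)
  refine ⟨⟨⟨_, _, _, by linarith, by linarith, by linarith, by ring, hmax.symm⟩, ?_⟩, hmax⟩
  rintro r ⟨x, y, z, hx, hy, hz, hsum, rfl⟩
  calc tripleRatio x y z ≤ tripleRatio ((x + z) / 2) y ((x + z) / 2) :=
        tripleRatio_le_midpoint hx hy hz
    _ = tripleRatio ((1 - y) / 2) y ((1 - y) / 2) := by rw [show x + z = 1 - y by linarith]
    _ ≤ (5 * √5 - 11) / 2 := tripleRatio_midpoint_le hy.le (by linarith)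
end

section
/- Let h11 ∈ ℂ and h12, t ∈ ℂ^{n-1} with h11 ≠ 0 and t ≠ 0. Then |h11|² |⟨h12, t⟩|² / ((|h11|² + ‖h12‖²)² ‖t‖² − (|h11|² + ‖h12‖²) |⟨h12, t⟩|²) ≤ ‖h12‖² / (|h11|² + ‖h12‖²), provided the denominator is positive. -/
noncomputable def enorm2 {n : ℕ} (x : Fin n → ℂ) : ℝ :=
  Real.sqrt (∑ i, Complex.normSq (x i))

lemma enorm2_eq_norm_toLp {n : ℕ} (x : Fin n → ℂ) :
    enorm2 x = ‖WithLp.toLp 2 x‖ := by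
  simp only [enorm2, EuclideanSpace.norm_eq, Complex.sq_norm]

lemma inner_toLp_eq_sum {n : ℕ} (x y : Fin n → ℂ) :
    inner ℂ (WithLp.toLp 2 x) (WithLp.toLp 2 y) = ∑ i, (starRingEnd ℂ) (x i) * y i := by
  simp only [PiLp.inner_apply, RCLike.inner_apply, mul_comm]

lemma normSq_sum_conj_mul_le {n : ℕ} (x y : Fin n → ℂ) :
    Complex.normSq (∑ i, (starRingEnd ℂ) (x i) * y i) ≤ enorm2 x ^ 2 * enorm2 y ^ 2 := by
  rw [← inner_toLp_eq_sum, ← Complex.sq_norm, enorm2_eq_norm_toLp, enorm2_eq_norm_toLp, ← mul_pow]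
  exact pow_le_pow_left₀ (norm_nonneg _) (norm_inner_le_norm _ _) 2

/-- Clearing the positive denominators reduces the inequality to `s ≤ b * T`. -/
lemma mul_div_sq_mul_sub_le {a b T s : ℝ} (ha : 0 ≤ a) (hb : 0 ≤ b) (hs : s ≤ b * T)
    (hden : 0 < (a + b) ^ 2 * T - (a + b) * s) :
    a * s / ((a + b) ^ 2 * T - (a + b) * s) ≤ b / (a + b) := by
  have hab : 0 < a + b := by
    refine lt_of_le_of_ne (by positivity) fun h => ?_
    rw [← h] at hden
    simp at hden
  rw [div_le_div_iff₀ hden hab]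
  nlinarith [mul_le_mul_of_nonneg_left hs hab.le]

theorem stmt_8_general {n : ℕ} (h11 : ℂ) (h12 t : Fin (n - 1) → ℂ)
    (hden : 0 < (Complex.normSq h11 + enorm2 h12 ^ 2) ^ 2 * enorm2 t ^ 2 -
      (Complex.normSq h11 + enorm2 h12 ^ 2) *
        Complex.normSq (∑ i, (starRingEnd ℂ) (h12 i) * t i)) :
    Complex.normSq h11 * Complex.normSq (∑ i, (starRingEnd ℂ) (h12 i) * t i) /
        ((Complex.normSq h11 + enorm2 h12 ^ 2) ^ 2 * enorm2 t ^ 2 -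
          (Complex.normSq h11 + enorm2 h12 ^ 2) *
            Complex.normSq (∑ i, (starRingEnd ℂ) (h12 i) * t i)) ≤
      enorm2 h12 ^ 2 / (Complex.normSq h11 + enorm2 h12 ^ 2) :=
  mul_div_sq_mul_sub_le (Complex.normSq_nonneg h11) (sq_nonneg _)
    (normSq_sum_conj_mul_le h12 t) hden

theorem stmt_8 {n : ℕ} (h11 : ℂ) (h12 t : Fin (n - 1) → ℂ)
    (hh11 : h11 ≠ 0) (ht : t ≠ 0)
    (hden : 0 < (Complex.normSq h11 + enorm2 h12 ^ 2) ^ 2 * enorm2 t ^ 2 -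
      (Complex.normSq h11 + enorm2 h12 ^ 2) *
        Complex.normSq (∑ i, (starRingEnd ℂ) (h12 i) * t i)) :
    Complex.normSq h11 * Complex.normSq (∑ i, (starRingEnd ℂ) (h12 i) * t i) /
        ((Complex.normSq h11 + enorm2 h12 ^ 2) ^ 2 * enorm2 t ^ 2 -
          (Complex.normSq h11 + enorm2 h12 ^ 2) *
            Complex.normSq (∑ i, (starRingEnd ℂ) (h12 i) * t i)) ≤
      enorm2 h12 ^ 2 / (Complex.normSq h11 + enorm2 h12 ^ 2) :=
  stmt_8_general h11 h12 t hden
end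

section
/- Let h11 ∈ ℂ, h12 ∈ ℂ^{n-1} (row), h21 ∈ ℂ^{n-1} (column), H22 ∈ ℂ^{(n-1)×(n-1)} invertible, with |h11|² + ‖h12‖² + ‖h21‖² + ‖H22‖_F² = 1. Then |h12 H22^{-1} h21|² / ((1 + ‖h12 H22^{-1}‖²)(1 + ‖H22^{-1} h21‖²)) ≤ (5√5 − 11)/2. -/
/-! With `u = h12 H22⁻¹` and `v = H22⁻¹ h21` one has `h12 = u H22`, `h21 = H22 v`, and the number
`T = |u h21|² = |h12 v|²` is bounded by Cauchy–Schwarz in three ways: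
`T ≤ ‖u‖²‖h21‖²`, `T ≤ ‖h12‖²‖v‖²` and `T ≤ ‖u‖²‖H22‖_F²‖v‖²`. Weighting them by `‖v‖²`, `‖u‖²` and `1`
and using the normalization gives `T (1 + ‖u‖² + ‖v‖²) ≤ ‖u‖²‖v‖²`, which reduces the claim to
`xy ≤ c (1 + x + y)(1 + x)(1 + y)` for `x, y ≥ 0` with `c = (5√5 − 11)/2 = φ⁻⁵`. For fixed `x + y = 2t`
the worst case is `x = y = t`, and the resulting cubic inequality in `t` has a double root at `t = φ`. -/

noncomputable def enormC {n : ℕ} (x : Fin n → ℂ) : ℝ :=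
  Real.sqrt (∑ i, Complex.normSq (x i))

noncomputable def fnorm {m n : ℕ} (A : Matrix (Fin m) (Fin n) ℂ) : ℝ :=
  Real.sqrt (∑ i, ∑ j, Complex.normSq (A i j))

open Matrix

lemma enormC_sq {n : ℕ} (x : Fin n → ℂ) : enormC x ^ 2 = ∑ i, Complex.normSq (x i) :=
  Real.sq_sqrt (Finset.sum_nonneg fun _ _ => Complex.normSq_nonneg _)

lemma fnorm_sq {m n : ℕ} (A : Matrix (Fin m) (Fin n) ℂ) : fnorm A ^ 2 = ∑ i, enormC (A i) ^ 2 := by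
  simp only [fnorm, enormC_sq]
  exact Real.sq_sqrt <|
    Finset.sum_nonneg fun _ _ => Finset.sum_nonneg fun _ _ => Complex.normSq_nonneg _

lemma normSq_dotProduct_le {n : ℕ} (u w : Fin n → ℂ) :
    Complex.normSq (u ⬝ᵥ w) ≤ enormC u ^ 2 * enormC w ^ 2 := by
  have h_triangle : ‖u ⬝ᵥ w‖ ≤ ∑ i, ‖u i‖ * ‖w i‖ :=
    (norm_sum_le _ _).trans_eq (by simp only [norm_mul])
  calc Complex.normSq (u ⬝ᵥ w) = ‖u ⬝ᵥ w‖ ^ 2 := (Complex.sq_norm _).symm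
    _ ≤ (∑ i, ‖u i‖ * ‖w i‖) ^ 2 := pow_le_pow_left₀ (norm_nonneg _) h_triangle 2
    _ ≤ (∑ i, ‖u i‖ ^ 2) * ∑ i, ‖w i‖ ^ 2 := Finset.sum_mul_sq_le_sq_mul_sq _ _ _
    _ = enormC u ^ 2 * enormC w ^ 2 := by simp only [enormC_sq, Complex.sq_norm]

lemma enormC_mulVec_sq_le {m n : ℕ} (A : Matrix (Fin m) (Fin n) ℂ) (v : Fin n → ℂ) :
    enormC (A *ᵥ v) ^ 2 ≤ fnorm A ^ 2 * enormC v ^ 2 := by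
  rw [enormC_sq, fnorm_sq, Finset.sum_mul]
  exact Finset.sum_le_sum fun i _ => normSq_dotProduct_le (A i) v

lemma normSq_dotProduct_mulVec_mul_le {m n : ℕ} (u : Fin m → ℂ) (H : Matrix (Fin m) (Fin n) ℂ)
    (v : Fin n → ℂ) :
    Complex.normSq (u ⬝ᵥ H *ᵥ v) * (1 + enormC u ^ 2 + enormC v ^ 2) ≤
      enormC u ^ 2 * enormC v ^ 2 * (fnorm H ^ 2 + enormC (u ᵥ* H) ^ 2 + enormC (H *ᵥ v) ^ 2) := by
  set T := Complex.normSq (u ⬝ᵥ H *ᵥ v)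
  have hu : 0 ≤ enormC u ^ 2 := sq_nonneg _
  have hv : 0 ≤ enormC v ^ 2 := sq_nonneg _
  have h_left : T ≤ enormC u ^ 2 * enormC (H *ᵥ v) ^ 2 := normSq_dotProduct_le u _
  have h_right : T ≤ enormC (u ᵥ* H) ^ 2 * enormC v ^ 2 := by
    rw [show T = _ from congrArg Complex.normSq (dotProduct_mulVec u H v)]
    exact normSq_dotProduct_le _ v
  have h_middle : T ≤ enormC u ^ 2 * (fnorm H ^ 2 * enormC v ^ 2) :=
    h_left.trans (mul_le_mul_of_nonneg_left (enormC_mulVec_sq_le H v) hu)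
  nlinarith [mul_le_mul_of_nonneg_left h_left hv, mul_le_mul_of_nonneg_left h_right hu]

lemma sq_le_golden_bound_mul {t : ℝ} (ht : 0 ≤ t) :
    t ^ 2 ≤ (5 * √5 - 11) / 2 * ((1 + 2 * t) * (1 + t) ^ 2) := by
  have h5 : √5 ^ 2 = 5 := Real.sq_sqrt (by norm_num)
  have h_lo : 11 / 5 < √5 := by nlinarith [Real.sqrt_nonneg 5]
  have h_hi : √5 < 3 := by nlinarith [Real.sqrt_nonneg 5]
  -- the difference of the two sides is `(5√5 − 11)/8 · (2t − 1 − √5)² (4t + 3 − √5)`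
  nlinarith [mul_nonneg (mul_nonneg (by linarith : (0 : ℝ) ≤ 5 * √5 - 11)
    (sq_nonneg (2 * t - 1 - √5))) (by linarith : (0 : ℝ) ≤ 4 * t + 3 - √5)]

lemma mul_le_golden_bound_mul {x y : ℝ} (hx : 0 ≤ x) (hy : 0 ≤ y) :
    x * y ≤ (5 * √5 - 11) / 2 * ((1 + x + y) * ((1 + x) * (1 + y))) := by
  obtain ⟨t, rfl⟩ : ∃ t, x = 2 * t - y := ⟨(x + y) / 2, by ring⟩
  have h_cubic := sq_le_golden_bound_mul (t := t) (by linarith)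
  generalize (5 * √5 - 11) / 2 = c at h_cubic ⊢
  have hp : (2 * t - y) * y ≤ t ^ 2 := by nlinarith [sq_nonneg (t - y)]
  -- for fixed `x + y = 2t` both sides are affine in `p = x y ≤ t²`
  rcases le_total 1 (c * (1 + 2 * t)) with h | h
  · nlinarith [mul_nonneg hx hy]
  · nlinarith [mul_le_mul_of_nonneg_right hp (sub_nonneg.2 h)]

theorem stmt_10 {n : ℕ} (h11 : ℂ) (h12 h21 : Fin (n - 1) → ℂ)
    (H22 : Matrix (Fin (n - 1)) (Fin (n - 1)) ℂ) (hH22 : IsUnit H22.det)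
    (hnorm : Complex.normSq h11 + enormC h12 ^ 2 + enormC h21 ^ 2 + fnorm H22 ^ 2 = 1) :
    Complex.normSq (dotProduct (Matrix.vecMul h12 H22⁻¹) h21) /
        ((1 + enormC (Matrix.vecMul h12 H22⁻¹) ^ 2) *
          (1 + enormC (Matrix.mulVec H22⁻¹ h21) ^ 2)) ≤
      (5 * Real.sqrt 5 - 11) / 2 := by
  set u := h12 ᵥ* H22⁻¹
  set v := H22⁻¹ *ᵥ h21
  have hu : u ᵥ* H22 = h12 := by rw [vecMul_vecMul, nonsing_inv_mul _ hH22, vecMul_one]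
  have hv : H22 *ᵥ v = h21 := by rw [mulVec_mulVec, mul_nonsing_inv _ hH22, one_mulVec]
  have h_key := normSq_dotProduct_mulVec_mul_le u H22 v
  rw [hu, hv] at h_key
  have h_mass : fnorm H22 ^ 2 + enormC h12 ^ 2 + enormC h21 ^ 2 ≤ 1 := by
    linarith [Complex.normSq_nonneg h11]
  have hx : 0 ≤ enormC u ^ 2 := sq_nonneg _
  have hy : 0 ≤ enormC v ^ 2 := sq_nonneg _
  have h_golden := mul_le_golden_bound_mul hx hy
  rw [div_le_iff₀ (by positivity)]
  refine le_of_mul_le_mul_right ?_ (by positivity : 0 < 1 + enormC u ^ 2 + enormC v ^ 2)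
  nlinarith [mul_le_mul_of_nonneg_left h_mass (mul_nonneg hx hy)]
end

section
/- For x, y > 0 with x + y < 1 and z = 1 − x − y: the function f(x,y) = x·y·(1−x−y) / ((y+x)(y+1−x−y)) = x·y·(1−x−y)/((x+y)(1−x)) attains its maximum over the open triangle {x>0, y>0, x+y<1} at the unique critical point x = (3−√5)/2, y = √5 − 2, with value (5√5−11)/2. -/
noncomputable def f16 (p : ℝ × ℝ) : ℝ :=
  p.1 * p.2 * (1 - p.1 - p.2) / ((p.1 + p.2) * (1 - p.1))

def S16 : Set (ℝ × ℝ) := {p | 0 < p.1 ∧ 0 < p.2 ∧ p.1 + p.2 < 1}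

/-!
Write `M = (5√5 - 11)/2`. Clearing the denominator, the claim is
`x y (1 - x - y) ≤ M (x + y)(1 - x)`. For `y ≤ M` this is crude: the numerator is at most
`M x (1 - x - y) = M ((x + y)(1 - x) - y)`. For `y ≥ M` the gap is a sum of two nonnegative terms,
`4 (M (x + y)(1 - x) - x y (1 - x - y))
   = (y - (√5 - 2))² ((1 + √5)/2 - y) + (1 - 2x - y)² (y - M)`,
which vanishes on the triangle only at `y = √5 - 2`, `x = (1 - y)/2`.
-/

lemma two_lt_sqrt_five : 2 < √5 := by
  rw [Real.lt_sqrt (by norm_num)]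
  norm_num

lemma sqrt_five_lt_three : √5 < 3 := by
  rw [Real.sqrt_lt' (by norm_num)]
  norm_num

lemma eleven_lt_five_mul_sqrt_five : 11 < 5 * √5 := by
  have : 11 / 5 < √5 := by
    rw [Real.lt_sqrt (by norm_num)]
    norm_num
  linarith

lemma four_mul_gap_eq_sum_sq_mul (x y : ℝ) :
    4 * ((5 * √5 - 11) / 2 * ((x + y) * (1 - x)) - x * y * (1 - x - y)) =
      (y - (√5 - 2)) ^ 2 * ((1 + √5) / 2 - y) +
        (1 - 2 * x - y) ^ 2 * (y - (5 * √5 - 11) / 2) := by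
  linear_combination (3 + 4 * y - √5) / 2 * Real.sq_sqrt (show (0 : ℝ) ≤ 5 by norm_num)

section Triangle

variable {x y : ℝ}

lemma mul_lt_of_le_max_value (hx : 0 < x) (hy : 0 < y) (hxy : x + y < 1)
    (h : y ≤ (5 * √5 - 11) / 2) :
    x * y * (1 - x - y) < (5 * √5 - 11) / 2 * ((x + y) * (1 - x)) := by
  have hM : 0 < (5 * √5 - 11) / 2 := by linarith [eleven_lt_five_mul_sqrt_five]
  calc x * y * (1 - x - y) ≤ (5 * √5 - 11) / 2 * (x * (1 - x - y)) := by
        nlinarith [mul_pos hx (sub_pos.2 hxy)]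
    _ = (5 * √5 - 11) / 2 * ((x + y) * (1 - x)) - (5 * √5 - 11) / 2 * y := by ring
    _ < (5 * √5 - 11) / 2 * ((x + y) * (1 - x)) := by linarith [mul_pos hM hy]

lemma gap_summands_nonneg (hy : y < 1) (h : (5 * √5 - 11) / 2 ≤ y) :
    0 ≤ (y - (√5 - 2)) ^ 2 * ((1 + √5) / 2 - y) ∧
      0 ≤ (1 - 2 * x - y) ^ 2 * (y - (5 * √5 - 11) / 2) :=
  ⟨mul_nonneg (sq_nonneg _) (by linarith [two_lt_sqrt_five]),
    mul_nonneg (sq_nonneg _) (sub_nonneg.2 h)⟩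

lemma mul_le_max_value (hx : 0 < x) (hy : 0 < y) (hxy : x + y < 1) :
    x * y * (1 - x - y) ≤ (5 * √5 - 11) / 2 * ((x + y) * (1 - x)) := by
  rcases le_or_gt y ((5 * √5 - 11) / 2) with h | h
  · exact (mul_lt_of_le_max_value hx hy hxy h).le
  · obtain ⟨hA, hB⟩ := gap_summands_nonneg (x := x) (by linarith) h.le
    linarith [four_mul_gap_eq_sum_sq_mul x y]

lemma eq_of_mul_eq_max_value (hx : 0 < x) (hy : 0 < y) (hxy : x + y < 1)
    (h : x * y * (1 - x - y) = (5 * √5 - 11) / 2 * ((x + y) * (1 - x))) :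
    x = (3 - √5) / 2 ∧ y = √5 - 2 := by
  have hyM : (5 * √5 - 11) / 2 < y := by
    by_contra! hle
    exact (mul_lt_of_le_max_value hx hy hxy hle).ne h
  obtain ⟨hA, hB⟩ := gap_summands_nonneg (x := x) (by linarith) hyM.le
  have hsum := four_mul_gap_eq_sum_sq_mul x y
  rw [h, sub_self, mul_zero, eq_comm, add_eq_zero_iff_of_nonneg hA hB] at hsum
  obtain ⟨hA0, hB0⟩ := hsum
  have hy' : y - (√5 - 2) = 0 :=
    pow_eq_zero_iff two_ne_zero |>.1 <|
      (mul_eq_zero.1 hA0).resolve_right (by linarith [two_lt_sqrt_five])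
  have hx' : 1 - 2 * x - y = 0 :=
    pow_eq_zero_iff two_ne_zero |>.1 <| (mul_eq_zero.1 hB0).resolve_right (sub_pos.2 hyM).ne'
  constructor <;> linarith

end Triangle

lemma f16_critical_point : f16 ((3 - √5) / 2, √5 - 2) = (5 * √5 - 11) / 2 := by
  have h2 := two_lt_sqrt_five
  rw [f16, div_eq_iff (by dsimp only; nlinarith)]
  linear_combination (5 - 3 * √5) / 8 * Real.sq_sqrt (show (0 : ℝ) ≤ 5 by norm_num)

theorem stmt_16 :
    ((3 - Real.sqrt 5) / 2, Real.sqrt 5 - 2) ∈ S16 ∧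
    f16 ((3 - Real.sqrt 5) / 2, Real.sqrt 5 - 2) = (5 * Real.sqrt 5 - 11) / 2 ∧
    (∀ p ∈ S16, f16 p ≤ (5 * Real.sqrt 5 - 11) / 2) ∧
    (∀ p ∈ S16, f16 p = (5 * Real.sqrt 5 - 11) / 2 →
      p = ((3 - Real.sqrt 5) / 2, Real.sqrt 5 - 2)) := by
  have h2 := two_lt_sqrt_five
  have h3 := sqrt_five_lt_three
  have den_pos {x y : ℝ} (hx : 0 < x) (hy : 0 < y) (hxy : x + y < 1) :
      0 < (x + y) * (1 - x) := by nlinarith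
  refine ⟨⟨by dsimp only; linarith, by dsimp only; linarith, by dsimp only; linarith⟩,
    f16_critical_point, ?_, ?_⟩
  · rintro ⟨x, y⟩ ⟨hx, hy, hxy⟩
    exact (div_le_iff₀ (den_pos hx hy hxy)).2 (mul_le_max_value hx hy hxy)
  · rintro ⟨x, y⟩ ⟨hx, hy, hxy⟩ h
    obtain ⟨rfl, rfl⟩ :=
      eq_of_mul_eq_max_value hx hy hxy ((div_eq_iff (den_pos hx hy hxy).ne').1 h)
    rfl
end
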